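/- The 3×3 matrix M = [[0.308, 0.311, 0.282], [0.410, 0.415, 0.376], [0.266, 0.269, 0.244]] has a real eigenvalue λ with λ > 0.96. -/
import Mathlib

open Matrix

noncomputable def skewM : Matrix (Fin 3) (Fin 3) ℝ :=
  !![0.308, 0.311, 0.282; 0.410, 0.415, 0.376; 0.266, 0.269, 0.244]

noncomputable def skewF (x : ℝ) : ℝ :=
  1/15625000 - (283/500000) * x + (967/1000) * x ^ 2 - x ^ 3

lemma skewF_eq_det (x : ℝ) : (skewM - x • (1 : Matrix (Fin 3) (Fin 3) ℝ)).det = skewF x := by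
  simp [skewM, skewF, Matrix.det_fin_three, Matrix.sub_apply, Matrix.smul_apply,
    Matrix.one_apply]
  ring

lemma skewF_cont : Continuous skewF := by
  unfold skewF; continuity

/-- The explicit 3×3 matrix of summed linearized coefficients for the skew
triangulation has a real eigenvalue greater than 0.96. -/
theorem skew_matrix_eigenvalue :
    ∃ lam : ℝ, 0.96 < lam ∧
      ∃ v : Fin 3 → ℝ, v ≠ 0 ∧
        (Matrix.mulVec !![0.308, 0.311, 0.282;
                          0.410, 0.415, 0.376;
                          0.266, 0.269, 0.244] v) = lam • v := by
  have hsub : Set.Icc (skewF 1) (skewF 0.96) ⊆ skewF '' Set.Icc (0.96 : ℝ) 1 :=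
    intermediate_value_Icc' (by norm_num) skewF_cont.continuousOn
  have h0 : (0 : ℝ) ∈ Set.Icc (skewF 1) (skewF 0.96) := by
    constructor <;> · unfold skewF; norm_num
  obtain ⟨x, hx, hfx⟩ := hsub h0
  have hxgt : (0.96 : ℝ) < x := by
    rcases lt_or_eq_of_le hx.1 with h | h
    · exact h
    · exfalso; rw [← h] at hfx; unfold skewF at hfx; norm_num at hfx
  have hdet : (skewM - x • (1 : Matrix (Fin 3) (Fin 3) ℝ)).det = 0 := by
    rw [skewF_eq_det]; exact hfx
  obtain ⟨v, hv, hmul⟩ := (Matrix.exists_mulVec_eq_zero_iff).2 hdet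
  refine ⟨x, hxgt, v, hv, ?_⟩
  have : skewM.mulVec v - x • v = 0 := by
    rw [← hmul, Matrix.sub_mulVec, Matrix.smul_mulVec, Matrix.one_mulVec]
  have := sub_eq_zero.mp this
  simpa [skewM] using this
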